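/- Assume l₁+l₂ ≥ 3 and l₂+l₃ ≥ 3 and Γ is nondegenerate. Then the Lie algebra S(l₁,l₂,l₃;0,Γ) is generated (as a Lie algebra) by the set {D_{p,q}(x^α t^i) : p,q ∈ {1,…,l}, α ∈ Γ∖{0}, i ∈ ℕ^{l₁+l₂}}; in particular every D_{p,q}(t^i) lies in the Lie subalgebra generated by this set. -/

import Mathlib

/-!
Spanning vectors of `S` bracket as
`[D_{p,q}(u), D_{r,s}(v)] = D_{p,r}(∂_q u ∂_s v) - D_{p,s}(∂_q u ∂_r v) - D_{q,r}(∂_p u ∂_s v)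
+ D_{q,s}(∂_p u ∂_r v)`, so `S` is a Lie subalgebra, and it remains to obtain the weight-zero
vectors `D_{p,q}(t^i)` from generators of nonzero weight.

If `α_q ≠ 0` and `t_p` is a variable, `[D_{p,q}(x^α t^{i+1_p}), D_{p,q}(x^{-α})]` equals
`-α_q (i_p + 1) D_{p,q}(t^i)` plus a multiple of `D_{p,q}(t^{i+1_p-1_q})`, which has lower degree in
`t_q`; induction on `i_q` puts `D_{p,q}(t^i)` in the generated subalgebra. Nondegeneracy of `Γ`
supplies such an `α` for every `q > l₁`. For `p, q ≤ l₁` one picks `r > l₁` and `α` with `α_r ≠ 0`;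
then `[D_{p,r}(x^α t^i), D_{r,q}(x^{-α})]` is `α_r² D_{p,q}(t^i)` up to terms of lower degree in `t_r`
and terms `D_{r,q}(t^j)` already obtained.
-/

open scoped BigOperators

namespace SDF

variable (F : Type) [Field F] [IsAlgClosed F] [CharZero F]
variable (l₁ l₂ l₃ : ℕ) (Γ : AddSubgroup (Fin (l₂ + l₃) → F))

/-- The semigroup algebra `A(l₁,l₂,l₃;Γ) = F[Γ × ℕ^{l₁+l₂}]`,
with basis `x^α t^i` for `α ∈ Γ`, `i ∈ ℕ^{l₁+l₂}`. -/
abbrev Alg : Type := AddMonoidAlgebra F (↥Γ × (Fin (l₁ + l₂) →₀ ℕ))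

/-- The basis monomial `x^α t^i`. -/
noncomputable def mono (α : Γ) (i : Fin (l₁ + l₂) →₀ ℕ) : Alg F l₁ l₂ l₃ Γ :=
  AddMonoidAlgebra.single (α, i) 1

/-- The `p`-th coordinate of `α ∈ Γ ⊆ F^{l₂+l₃}`, with the convention `α_p = 0` for `p ≤ l₁`. -/
def acoord (p : Fin (l₁ + l₂ + l₃)) (α : Γ) : F :=
  if h : l₁ ≤ (p : ℕ) then (α : Fin (l₂ + l₃) → F) ⟨(p : ℕ) - l₁, by have := p.isLt; omega⟩
  else 0

/-- The `p`-th coordinate of a general `μ ∈ F^{l₂+l₃}`, with the convention `μ_p = 0` for `p ≤ l₁`. -/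
def fcoord (p : Fin (l₁ + l₂ + l₃)) (μ : Fin (l₂ + l₃) → F) : F :=
  if h : l₁ ≤ (p : ℕ) then μ ⟨(p : ℕ) - l₁, by have := p.isLt; omega⟩ else 0

/-- The `p`-th component of `i ∈ ℕ^{l₁+l₂}`, with the convention `i_p = 0` for `p > l₁+l₂`. -/
def icoord (p : Fin (l₁ + l₂ + l₃)) (i : Fin (l₁ + l₂) →₀ ℕ) : ℕ :=
  if h : (p : ℕ) < l₁ + l₂ then i ⟨(p : ℕ), h⟩ else 0

/-- `i - 1_[p]` (truncated subtraction; only used with coefficient `i_p`). -/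
noncomputable def lower (p : Fin (l₁ + l₂ + l₃)) (i : Fin (l₁ + l₂) →₀ ℕ) : Fin (l₁ + l₂) →₀ ℕ :=
  if h : (p : ℕ) < l₁ + l₂ then i - Finsupp.single ⟨(p : ℕ), h⟩ 1 else i

/-- The derivation `∂_p` of `A(l₁,l₂,l₃;Γ)`:
`∂_p(x^α t^i) = α_p x^α t^i + i_p x^α t^{i - 1_[p]}`. -/
noncomputable def pd (p : Fin (l₁ + l₂ + l₃)) :
    Alg F l₁ l₂ l₃ Γ →ₗ[F] Alg F l₁ l₂ l₃ Γ :=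
  (Finsupp.lsum F fun g : ↥Γ × (Fin (l₁ + l₂) →₀ ℕ) =>
    LinearMap.toSpanSingleton F (Alg F l₁ l₂ l₃ Γ)
      (acoord F l₁ l₂ l₃ Γ p g.1 • mono F l₁ l₂ l₃ Γ g.1 g.2
        + (icoord l₁ l₂ l₃ p g.2 : F) • mono F l₁ l₂ l₃ Γ g.1 (lower l₁ l₂ l₃ p g.2))) ∘ₗ
    (AddMonoidAlgebra.coeffLinearEquiv F).toLinearMap

/-- The Witt algebra `W(l₁,l₂,l₃;Γ) = A·D`; the tuple `u : Wt` represents `Σ_p u_p ∂_p`. -/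
abbrev Wt : Type := Fin (l₁ + l₂ + l₃) → Alg F l₁ l₂ l₃ Γ

/-- The Lie bracket of `W(l₁,l₂,l₃;Γ)`:
`[Σ_p u_p ∂_p, Σ_q v_q ∂_q] = Σ_{p,q} (u_p ∂_p(v_q) - v_p ∂_p(u_q)) ∂_q`. -/
noncomputable def wbr (u v : Wt F l₁ l₂ l₃ Γ) : Wt F l₁ l₂ l₃ Γ :=
  fun r => ∑ p, (u p * pd F l₁ l₂ l₃ Γ p (v r) - v p * pd F l₁ l₂ l₃ Γ p (u r))

/-- `D_{p,q}(u) = ∂_p(u) ∂_q - ∂_q(u) ∂_p`. -/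
noncomputable def Dpq (p q : Fin (l₁ + l₂ + l₃)) (u : Alg F l₁ l₂ l₃ Γ) :
    Wt F l₁ l₂ l₃ Γ :=
  Pi.single q (pd F l₁ l₂ l₃ Γ p u) - Pi.single p (pd F l₁ l₂ l₃ Γ q u)

/-- The divergence-free algebra `S(l₁,l₂,l₃;0,Γ) = Span{D_{p,q}(u)}`. -/
noncomputable def Ssub : Submodule F (Wt F l₁ l₂ l₃ Γ) :=
  Submodule.span F {w | ∃ p q u, w = Dpq F l₁ l₂ l₃ Γ p q u}

/-- `Γ` is nondegenerate: it contains an `F`-basis of `F^{l₂+l₃}`, i.e. it spans. -/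
def Nondeg : Prop := Submodule.span F (Γ : Set (Fin (l₂ + l₃) → F)) = ⊤

/-- The divergence `div(Σ_p u_p ∂_p) = Σ_p ∂_p(u_p)`. -/
noncomputable def dvg (w : Wt F l₁ l₂ l₃ Γ) : Alg F l₁ l₂ l₃ Γ :=
  ∑ p, pd F l₁ l₂ l₃ Γ p (w p)

/-- The action of `Σ_p u_p ∂_p ∈ W` on `A_μ` (the space `A` with basis `v_{β,i}` the monomials):
`(u ∂_p) . v = u * (∂_p + μ_p) v`. On basis elements this gives exactly the defining formulas
of the module `A_μ`. -/
noncomputable def actW (μ : Fin (l₂ + l₃) → F) (X : Wt F l₁ l₂ l₃ Γ) :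
    Alg F l₁ l₂ l₃ Γ →ₗ[F] Alg F l₁ l₂ l₃ Γ :=
  ∑ p, (LinearMap.mulLeft F (X p)).comp
    (pd F l₁ l₂ l₃ Γ p + fcoord F l₁ l₂ l₃ p μ • LinearMap.id)

/-- The element `Σ_p a_p ∂_p` of `D ⊆ W`. -/
noncomputable def wD (a : Fin (l₁ + l₂ + l₃) → F) : Wt F l₁ l₂ l₃ Γ :=
  fun p => algebraMap F (Alg F l₁ l₂ l₃ Γ) (a p)

/-- The element `∂_p ∈ W`. -/
noncomputable def wdelta (p : Fin (l₁ + l₂ + l₃)) : Wt F l₁ l₂ l₃ Γ :=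
  Pi.single p 1

/-- `β(∂) = Σ_{p>l₁} a_p β_p` for `∂ = Σ_p a_p ∂_p`. -/
def beval (β : Fin (l₂ + l₃) → F) (a : Fin (l₁ + l₂ + l₃) → F) : F :=
  ∑ p, a p * fcoord F l₁ l₂ l₃ p β


/-- The Lie subalgebra of `W(l₁,l₂,l₃;Γ)` generated by a set: the smallest subspace
containing the set and closed under the bracket. -/
noncomputable def liegen (s : Set (Wt F l₁ l₂ l₃ Γ)) : Submodule F (Wt F l₁ l₂ l₃ Γ) :=
  sInf {N : Submodule F (Wt F l₁ l₂ l₃ Γ) |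
    s ⊆ N ∧ ∀ x ∈ N, ∀ y ∈ N, wbr F l₁ l₂ l₃ Γ x y ∈ N}

end SDF

namespace SDF

variable {F : Type} [Field F] {l₁ l₂ l₃ : ℕ} {Γ : AddSubgroup (Fin (l₂ + l₃) → F)}

local notation "𝕞" => mono F l₁ l₂ l₃ Γ
local notation "Pd" => pd F l₁ l₂ l₃ Γ
local notation "𝔇" => Dpq F l₁ l₂ l₃ Γ
local notation "Br" => wbr F l₁ l₂ l₃ Γ
local notation "ac" => acoord F l₁ l₂ l₃ Γ
local notation "ic" => icoord l₁ l₂ l₃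
local notation "lo" => lower l₁ l₂ l₃

lemma acoord_zero (p : Fin (l₁ + l₂ + l₃)) : ac p 0 = 0 := by
  unfold acoord; split <;> simp

lemma acoord_neg (p : Fin (l₁ + l₂ + l₃)) (α : Γ) : ac p (-α) = -ac p α := by
  unfold acoord; split <;> simp

lemma acoord_add (p : Fin (l₁ + l₂ + l₃)) (α β : Γ) : ac p (α + β) = ac p α + ac p β := by
  unfold acoord; split <;> simp

lemma acoord_of_lt {p : Fin (l₁ + l₂ + l₃)} (hp : (p : ℕ) < l₁) (α : Γ) : ac p α = 0 :=
  dif_neg (Nat.not_le.mpr hp)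

lemma exists_acoord_ne_zero (hΓ : Nondeg F l₂ l₃ Γ) {p : Fin (l₁ + l₂ + l₃)}
    (hp : l₁ ≤ (p : ℕ)) : ∃ α : Γ, ac p α ≠ 0 := by
  by_contra! h
  set c : Fin (l₂ + l₃) := ⟨(p : ℕ) - l₁, by omega⟩
  have hker : Submodule.span F (Γ : Set (Fin (l₂ + l₃) → F)) ≤ LinearMap.ker (LinearMap.proj c) :=
    Submodule.span_le.mpr fun μ hμ => by
      simpa [acoord, hp] using h ⟨μ, hμ⟩
  rw [hΓ] at hker
  simpa using hker (Submodule.mem_top (x := Pi.single c 1))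

lemma icoord_zero (p : Fin (l₁ + l₂ + l₃)) : ic p 0 = 0 := by
  unfold icoord; split <;> simp

lemma icoord_add (p : Fin (l₁ + l₂ + l₃)) (i j : Fin (l₁ + l₂) →₀ ℕ) :
    ic p (i + j) = ic p i + ic p j := by
  unfold icoord; split <;> simp

lemma icoord_of_le {p : Fin (l₁ + l₂ + l₃)} (hp : l₁ + l₂ ≤ (p : ℕ)) (i : Fin (l₁ + l₂) →₀ ℕ) :
    ic p i = 0 :=
  dif_neg (Nat.not_lt.mpr hp)

lemma lt_of_icoord_ne_zero {p : Fin (l₁ + l₂ + l₃)} {i : Fin (l₁ + l₂) →₀ ℕ} (hi : ic p i ≠ 0) :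
    (p : ℕ) < l₁ + l₂ := by
  by_contra! hp
  exact hi (icoord_of_le hp i)

lemma icoord_lower_self (p : Fin (l₁ + l₂ + l₃)) (i : Fin (l₁ + l₂) →₀ ℕ) :
    ic p (lo p i) = ic p i - 1 := by
  unfold icoord lower
  split <;> simp

lemma icoord_lower_of_ne {p q : Fin (l₁ + l₂ + l₃)} (hpq : p ≠ q) (i : Fin (l₁ + l₂) →₀ ℕ) :
    ic p (lo q i) = ic p i := by
  unfold icoord lower
  split_ifs <;> simp_all [Fin.ext_iff]

lemma lower_comm (p q : Fin (l₁ + l₂ + l₃)) (i : Fin (l₁ + l₂) →₀ ℕ) :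
    lo p (lo q i) = lo q (lo p i) := by
  unfold lower
  split_ifs <;> simp [tsub_right_comm]

lemma lower_add_of_icoord_ne_zero {p : Fin (l₁ + l₂ + l₃)} {i : Fin (l₁ + l₂) →₀ ℕ}
    (hi : ic p i ≠ 0) (j : Fin (l₁ + l₂) →₀ ℕ) : lo p (i + j) = lo p i + j := by
  have hp := lt_of_icoord_ne_zero hi
  simp only [icoord, hp, dite_true] at hi
  simp only [lower, hp, dite_true]
  ext c
  rcases eq_or_ne c ⟨p, hp⟩ with rfl | hc
  · simp only [Finsupp.tsub_apply, Finsupp.add_apply, Finsupp.single_eq_same]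
    omega
  · simp [Ne.symm hc]

lemma icoord_add_single {p : Fin (l₁ + l₂ + l₃)} (hp : (p : ℕ) < l₁ + l₂)
    (i : Fin (l₁ + l₂) →₀ ℕ) : ic p (i + Finsupp.single ⟨p, hp⟩ 1) = ic p i + 1 := by
  simp [icoord, hp]

lemma icoord_add_single_of_ne {p q : Fin (l₁ + l₂ + l₃)} (hp : (p : ℕ) < l₁ + l₂) (hqp : q ≠ p)
    (i : Fin (l₁ + l₂) →₀ ℕ) : ic q (i + Finsupp.single ⟨p, hp⟩ 1) = ic q i := by
  unfold icoord
  split_ifs <;> simp_all [Fin.ext_iff]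

lemma lower_add_single {p : Fin (l₁ + l₂ + l₃)} (hp : (p : ℕ) < l₁ + l₂)
    (i : Fin (l₁ + l₂) →₀ ℕ) : lo p (i + Finsupp.single ⟨p, hp⟩ 1) = i := by
  simp [lower, hp]

lemma mono_mul_mono (α β : Γ) (i j : Fin (l₁ + l₂) →₀ ℕ) : 𝕞 α i * 𝕞 β j = 𝕞 (α + β) (i + j) := by
  simp [mono, AddMonoidAlgebra.single_mul_single]

lemma pd_mono (p : Fin (l₁ + l₂ + l₃)) (α : Γ) (i : Fin (l₁ + l₂) →₀ ℕ) :
    Pd p (𝕞 α i) = ac p α • 𝕞 α i + (ic p i : F) • 𝕞 α (lo p i) := by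
  simp [pd, mono, AddMonoidAlgebra.coeffLinearEquiv, LinearMap.toSpanSingleton_apply]

lemma pd_mono_zero (p : Fin (l₁ + l₂ + l₃)) (β : Γ) : Pd p (𝕞 β 0) = ac p β • 𝕞 β 0 := by
  simp [pd_mono, icoord_zero]

lemma pd_mono_zero_of_le {p : Fin (l₁ + l₂ + l₃)} (hp : l₁ + l₂ ≤ (p : ℕ))
    (i : Fin (l₁ + l₂) →₀ ℕ) : Pd p (𝕞 0 i) = 0 := by
  simp [pd_mono, acoord_zero, icoord_of_le hp]

lemma pd_mono_mul_mono_neg (p : Fin (l₁ + l₂ + l₃)) (α : Γ) (i : Fin (l₁ + l₂) →₀ ℕ) :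
    Pd p (𝕞 α i) * 𝕞 (-α) 0 = ac p α • 𝕞 0 i + (ic p i : F) • 𝕞 0 (lo p i) := by
  simp [pd_mono, add_mul, mono_mul_mono]

@[elab_as_elim]
lemma induction_on_mono {P : Alg F l₁ l₂ l₃ Γ → Prop} (u : Alg F l₁ l₂ l₃ Γ)
    (hmono : ∀ α i, P (𝕞 α i)) (hadd : ∀ u v, P u → P v → P (u + v))
    (hsmul : ∀ (c : F) u, P u → P (c • u)) : P u := by
  induction u using AddMonoidAlgebra.induction_on with
  | of g => simpa [AddMonoidAlgebra.of_apply, mono] using hmono g.1 g.2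
  | add u v hu hv => exact hadd u v hu hv
  | smul c u hu => exact hsmul c u hu

lemma pd_comm (p q : Fin (l₁ + l₂ + l₃)) (u : Alg F l₁ l₂ l₃ Γ) :
    Pd p (Pd q u) = Pd q (Pd p u) := by
  refine induction_on_mono u (fun α i => ?_) (fun u v hu hv => by simp [hu, hv])
    (fun c u hu => by simp [hu])
  rcases eq_or_ne p q with rfl | hpq
  · rfl
  simp only [pd_mono, map_add, map_smul, icoord_lower_of_ne hpq, icoord_lower_of_ne hpq.symm,
    lower_comm q p]
  module

lemma icoord_smul_mono_lower_add (p : Fin (l₁ + l₂ + l₃)) (γ : Γ) (i j : Fin (l₁ + l₂) →₀ ℕ) :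
    (ic p i : F) • 𝕞 γ (lo p (i + j)) = (ic p i : F) • 𝕞 γ (lo p i + j) := by
  by_cases hi : ic p i = 0
  · simp [hi]
  · rw [lower_add_of_icoord_ne_zero hi]

lemma pd_mono_mul_mono (p : Fin (l₁ + l₂ + l₃)) (α β : Γ) (i j : Fin (l₁ + l₂) →₀ ℕ) :
    Pd p (𝕞 α i * 𝕞 β j) = Pd p (𝕞 α i) * 𝕞 β j + 𝕞 α i * Pd p (𝕞 β j) := by
  have hj := icoord_smul_mono_lower_add p (α + β) j i
  rw [add_comm j i, add_comm (lo p j) i] at hj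
  simp only [mono_mul_mono, pd_mono, acoord_add, icoord_add, Nat.cast_add, add_smul,
    icoord_smul_mono_lower_add, hj, add_mul, mul_add, smul_mul_assoc, mul_smul_comm]
  module

lemma pd_mul (p : Fin (l₁ + l₂ + l₃)) (u v : Alg F l₁ l₂ l₃ Γ) :
    Pd p (u * v) = Pd p u * v + u * Pd p v := by
  refine induction_on_mono u (fun α i => ?_) (fun u u' hu hu' => ?_) (fun c u hu => ?_)
  · refine induction_on_mono v (fun β j => pd_mono_mul_mono p α β i j)
      (fun v v' hv hv' => ?_) (fun c v hv => ?_)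
    · simp only [mul_add, map_add, hv, hv']
      abel
    · simp only [mul_smul_comm, map_smul, hv, smul_add]
  · simp only [add_mul, map_add, hu, hu']
    abel
  · simp only [smul_mul_assoc, map_smul, hu, smul_add]

lemma Dpq_self (p : Fin (l₁ + l₂ + l₃)) (u : Alg F l₁ l₂ l₃ Γ) : 𝔇 p p u = 0 := by
  simp [Dpq]

lemma Dpq_swap (p q : Fin (l₁ + l₂ + l₃)) (u : Alg F l₁ l₂ l₃ Γ) : 𝔇 q p u = -𝔇 p q u := by
  simp [Dpq]

lemma Dpq_add (p q : Fin (l₁ + l₂ + l₃)) (u v : Alg F l₁ l₂ l₃ Γ) :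
    𝔇 p q (u + v) = 𝔇 p q u + 𝔇 p q v := by
  simp only [Dpq, map_add, Pi.single_add]
  abel

lemma Dpq_sub (p q : Fin (l₁ + l₂ + l₃)) (u v : Alg F l₁ l₂ l₃ Γ) :
    𝔇 p q (u - v) = 𝔇 p q u - 𝔇 p q v := by
  simp only [Dpq, map_sub, Pi.single_sub]
  abel

lemma Dpq_smul (p q : Fin (l₁ + l₂ + l₃)) (c : F) (u : Alg F l₁ l₂ l₃ Γ) :
    𝔇 p q (c • u) = c • 𝔇 p q u := by
  simp only [Dpq, map_smul, Pi.single_smul, smul_sub]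

/-- The second-order terms cancel because the `∂_p` commute. -/
lemma wbr_Dpq_Dpq (p q r s : Fin (l₁ + l₂ + l₃)) (u v : Alg F l₁ l₂ l₃ Γ) :
    Br (𝔇 p q u) (𝔇 r s v)
      = 𝔇 p r (Pd q u * Pd s v) - 𝔇 p s (Pd q u * Pd r v)
        - 𝔇 q r (Pd p u * Pd s v) + 𝔇 q s (Pd p u * Pd r v) := by
  funext c
  have hsingle : ∀ (x s : Fin (l₁ + l₂ + l₃)) (w : Alg F l₁ l₂ l₃ Γ),
      Pd x ((Pi.single s w : Wt F l₁ l₂ l₃ Γ) c) = (Pi.single s (Pd x w) : Wt F l₁ l₂ l₃ Γ) c :=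
    fun x s w => Pi.apply_single (fun _ => Pd x) (fun _ => map_zero _) s w c
  simp only [wbr, Dpq, Pi.sub_apply, Pi.add_apply, map_sub, hsingle]
  simp only [Pi.single_apply, sub_mul, mul_sub, ite_mul, mul_ite, zero_mul, mul_zero,
    Finset.sum_sub_distrib, pd_mul, pd_comm q p u, pd_comm s r v]
  split_ifs <;>
    simp only [Finset.sum_sub_distrib, Finset.sum_ite_eq', Finset.mem_univ, if_true,
      Finset.sum_const_zero, sub_zero, zero_sub] <;>
    ring

lemma wbr_Dpq_Dpq_same (p q : Fin (l₁ + l₂ + l₃)) (u v : Alg F l₁ l₂ l₃ Γ) :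
    Br (𝔇 p q u) (𝔇 p q v) = 𝔇 p q (Pd p u * Pd q v - Pd q u * Pd p v) := by
  rw [wbr_Dpq_Dpq, Dpq_self, Dpq_self, Dpq_swap p q, Dpq_sub]
  abel

lemma wbr_add_left (x y z : Wt F l₁ l₂ l₃ Γ) : Br (x + y) z = Br x z + Br y z := by
  funext r
  simp only [wbr, Pi.add_apply, map_add, add_mul, mul_add, ← Finset.sum_add_distrib]
  exact Finset.sum_congr rfl fun _ _ => by abel

lemma wbr_add_right (x y z : Wt F l₁ l₂ l₃ Γ) : Br x (y + z) = Br x y + Br x z := by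
  funext r
  simp only [wbr, Pi.add_apply, map_add, add_mul, mul_add, ← Finset.sum_add_distrib]
  exact Finset.sum_congr rfl fun _ _ => by abel

lemma wbr_smul_left (c : F) (x z : Wt F l₁ l₂ l₃ Γ) : Br (c • x) z = c • Br x z := by
  funext r
  simp only [wbr, Pi.smul_apply, map_smul, smul_mul_assoc, mul_smul_comm, ← smul_sub,
    ← Finset.smul_sum]

lemma wbr_smul_right (c : F) (x z : Wt F l₁ l₂ l₃ Γ) : Br x (c • z) = c • Br x z := by
  funext r
  simp only [wbr, Pi.smul_apply, map_smul, smul_mul_assoc, mul_smul_comm, ← smul_sub,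
    ← Finset.smul_sum]

variable (F l₁ l₂ l₃ Γ) in
noncomputable def wbrₗ : Wt F l₁ l₂ l₃ Γ →ₗ[F] Wt F l₁ l₂ l₃ Γ →ₗ[F] Wt F l₁ l₂ l₃ Γ :=
  LinearMap.mk₂ F (wbr F l₁ l₂ l₃ Γ) wbr_add_left wbr_smul_left wbr_add_right wbr_smul_right

lemma wbr_mem_Ssub {x y : Wt F l₁ l₂ l₃ Γ} (hx : x ∈ Ssub F l₁ l₂ l₃ Γ)
    (hy : y ∈ Ssub F l₁ l₂ l₃ Γ) : Br x y ∈ Ssub F l₁ l₂ l₃ Γ := by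
  have hmem : ∀ p q u, 𝔇 p q u ∈ Ssub F l₁ l₂ l₃ Γ := fun p q u =>
    Submodule.subset_span ⟨p, q, u, rfl⟩
  suffices h : Submodule.map₂ (wbrₗ F l₁ l₂ l₃ Γ) (Ssub F l₁ l₂ l₃ Γ) (Ssub F l₁ l₂ l₃ Γ)
      ≤ Ssub F l₁ l₂ l₃ Γ from h (Submodule.apply_mem_map₂ _ hx hy)
  rw [Ssub, Submodule.map₂_span_span, Submodule.span_le]
  rintro _ ⟨_, ⟨p, q, u, rfl⟩, _, ⟨r, s, v, rfl⟩, rfl⟩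
  change Br (𝔇 p q u) (𝔇 r s v) ∈ Ssub F l₁ l₂ l₃ Γ
  rw [wbr_Dpq_Dpq]
  exact add_mem (sub_mem (sub_mem (hmem _ _ _) (hmem _ _ _)) (hmem _ _ _)) (hmem _ _ _)

section Generation

variable {s : Set (Wt F l₁ l₂ l₃ Γ)}

lemma subset_liegen : s ⊆ liegen F l₁ l₂ l₃ Γ s := fun _ hx =>
  Submodule.mem_sInf.mpr fun _ hN => hN.1 hx

lemma wbr_mem_liegen {x y : Wt F l₁ l₂ l₃ Γ} (hx : x ∈ liegen F l₁ l₂ l₃ Γ s)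
    (hy : y ∈ liegen F l₁ l₂ l₃ Γ s) : Br x y ∈ liegen F l₁ l₂ l₃ Γ s :=
  Submodule.mem_sInf.mpr fun N hN =>
    hN.2 x (Submodule.mem_sInf.mp hx N hN) y (Submodule.mem_sInf.mp hy N hN)

lemma liegen_le {N : Submodule F (Wt F l₁ l₂ l₃ Γ)} (hs : s ⊆ N)
    (hN : ∀ x ∈ N, ∀ y ∈ N, Br x y ∈ N) : liegen F l₁ l₂ l₃ Γ s ≤ N :=
  sInf_le ⟨hs, hN⟩

end Generation

section WeightZero

lemma wbr_Dpq_Dpq_mono_zero (p q : Fin (l₁ + l₂ + l₃)) (u : Alg F l₁ l₂ l₃ Γ) (β : Γ) :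
    Br (𝔇 p q u) (𝔇 p q (𝕞 β 0))
      = ac q β • 𝔇 p q (Pd p u * 𝕞 β 0) - ac p β • 𝔇 p q (Pd q u * 𝕞 β 0) := by
  rw [wbr_Dpq_Dpq_same, pd_mono_zero, pd_mono_zero, mul_smul_comm, mul_smul_comm, Dpq_sub,
    Dpq_smul, Dpq_smul]

lemma wbr_Dpr_Drq_mono_zero (p q r : Fin (l₁ + l₂ + l₃)) (u : Alg F l₁ l₂ l₃ Γ) (β : Γ) :
    Br (𝔇 p r u) (𝔇 r q (𝕞 β 0))
      = ac q β • 𝔇 p r (Pd r u * 𝕞 β 0) - ac r β • 𝔇 p q (Pd r u * 𝕞 β 0)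
        + ac r β • 𝔇 r q (Pd p u * 𝕞 β 0) := by
  rw [wbr_Dpq_Dpq, pd_mono_zero, pd_mono_zero, Dpq_self]
  simp only [mul_smul_comm, Dpq_smul]
  abel

variable (F l₁ l₂ l₃ Γ) in
def nonzeroWeightGens : Set (Wt F l₁ l₂ l₃ Γ) :=
  {w | ∃ (p q : Fin (l₁ + l₂ + l₃)) (α : Γ) (i : Fin (l₁ + l₂) →₀ ℕ), α ≠ 0 ∧ w = 𝔇 p q (𝕞 α i)}

local notation "L" => liegen F l₁ l₂ l₃ Γ (nonzeroWeightGens F l₁ l₂ l₃ Γ)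

lemma Dpq_mono_mem_liegen {α : Γ} (hα : α ≠ 0) (p q : Fin (l₁ + l₂ + l₃))
    (i : Fin (l₁ + l₂) →₀ ℕ) : 𝔇 p q (𝕞 α i) ∈ L :=
  subset_liegen ⟨p, q, α, i, hα, rfl⟩

variable [CharZero F]

lemma Dpq_mono_zero_mem_liegen_of_acoord_ne_zero {p q : Fin (l₁ + l₂ + l₃)}
    (hp : (p : ℕ) < l₁ + l₂) (hpq : p ≠ q) {α : Γ} (hα : ac q α ≠ 0) (i : Fin (l₁ + l₂) →₀ ℕ) :
    𝔇 p q (𝕞 0 i) ∈ L := by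
  have hα0 : α ≠ 0 := by rintro rfl; exact hα (acoord_zero q)
  set e : Fin (l₁ + l₂) →₀ ℕ := Finsupp.single ⟨p, hp⟩ 1
  have hpe : ∀ i, ic p (i + e) = ic p i + 1 := icoord_add_single hp
  have hqe : ∀ i, ic q (i + e) = ic q i := icoord_add_single_of_ne hp hpq.symm
  have hlo : ∀ i, lo p (i + e) = i := lower_add_single hp
  induction hn : ic q i using Nat.strong_induction_on generalizing i with
  | _ n ih =>
    have hbr : Br (𝔇 p q (𝕞 α (i + e))) (𝔇 p q (𝕞 (-α) 0)) ∈ L :=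
      wbr_mem_liegen (Dpq_mono_mem_liegen hα0 p q _)
        (Dpq_mono_mem_liegen (neg_ne_zero.mpr hα0) p q 0)
    have hformula : Br (𝔇 p q (𝕞 α (i + e))) (𝔇 p q (𝕞 (-α) 0))
        = -(ac q α * (ic p i + 1)) • 𝔇 p q (𝕞 0 i)
          + (ac p α * ic q i) • 𝔇 p q (𝕞 0 (lo q (i + e))) := by
      simp only [wbr_Dpq_Dpq_mono_zero, acoord_neg, pd_mono_mul_mono_neg, hpe, hqe, hlo, Dpq_add,
        Dpq_smul, Nat.cast_add, Nat.cast_one]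
      module
    have hlower : (ac p α * ic q i) • 𝔇 p q (𝕞 0 (lo q (i + e))) ∈ L := by
      rcases eq_or_ne (ic q i) 0 with h | h
      · simp [h]
      · refine Submodule.smul_mem _ _ (ih _ ?_ _ rfl)
        rw [icoord_lower_self, hqe]
        omega
    have hcoeff : -(ac q α * (ic p i + 1)) ≠ 0 :=
      neg_ne_zero.mpr (mul_ne_zero hα (Nat.cast_add_one_ne_zero _))
    refine (Submodule.smul_mem_iff _ hcoeff).mp ?_
    convert sub_mem hbr hlower using 1
    rw [hformula]
    abel

lemma Dpq_mono_zero_mem_liegen_of_lt_of_lt {p q r : Fin (l₁ + l₂ + l₃)} (hp : (p : ℕ) < l₁)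
    (hq : (q : ℕ) < l₁) {α : Γ} (hα : ac r α ≠ 0) (i : Fin (l₁ + l₂) →₀ ℕ) :
    𝔇 p q (𝕞 0 i) ∈ L := by
  have hα0 : α ≠ 0 := by rintro rfl; exact hα (acoord_zero r)
  have hrq : ∀ k, 𝔇 r q (𝕞 0 k) ∈ L := fun k => by
    have hqr : q ≠ r := by rintro rfl; exact hα (acoord_of_lt hq α)
    rw [Dpq_swap]
    exact neg_mem (Dpq_mono_zero_mem_liegen_of_acoord_ne_zero (by omega) hqr hα k)
  induction hn : ic r i using Nat.strong_induction_on generalizing i with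
  | _ n ih =>
    have hbr : Br (𝔇 p r (𝕞 α i)) (𝔇 r q (𝕞 (-α) 0)) ∈ L :=
      wbr_mem_liegen (Dpq_mono_mem_liegen hα0 p r i)
        (Dpq_mono_mem_liegen (neg_ne_zero.mpr hα0) r q 0)
    have hformula : Br (𝔇 p r (𝕞 α i)) (𝔇 r q (𝕞 (-α) 0))
        = (ac r α * ac r α) • 𝔇 p q (𝕞 0 i) + (ac r α * ic r i) • 𝔇 p q (𝕞 0 (lo r i))
          - (ac r α * ic p i) • 𝔇 r q (𝕞 0 (lo p i)) := by
      simp only [wbr_Dpr_Drq_mono_zero, acoord_neg, acoord_of_lt hq, acoord_of_lt hp,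
        pd_mono_mul_mono_neg, Dpq_add, Dpq_smul]
      module
    have hlower : (ac r α * ic r i) • 𝔇 p q (𝕞 0 (lo r i)) ∈ L := by
      rcases eq_or_ne (ic r i) 0 with h | h
      · simp [h]
      · refine Submodule.smul_mem _ _ (ih _ ?_ _ rfl)
        rw [icoord_lower_self]
        omega
    refine (Submodule.smul_mem_iff _ (mul_ne_zero hα hα)).mp ?_
    convert add_mem (sub_mem hbr hlower) (Submodule.smul_mem _ (ac r α * ic p i) (hrq (lo p i)))
      using 1
    rw [hformula]
    abel

lemma Dpq_mono_zero_mem_liegen (hl : 0 < l₂ + l₃) (hΓ : Nondeg F l₂ l₃ Γ)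
    (p q : Fin (l₁ + l₂ + l₃)) (i : Fin (l₁ + l₂) →₀ ℕ) : 𝔇 p q (𝕞 0 i) ∈ L := by
  rcases eq_or_ne p q with rfl | hpq
  · rw [Dpq_self]
    exact zero_mem _
  by_cases hq : l₁ ≤ (q : ℕ)
  · obtain ⟨α, hα⟩ := exists_acoord_ne_zero hΓ hq
    by_cases hp : (p : ℕ) < l₁ + l₂
    · exact Dpq_mono_zero_mem_liegen_of_acoord_ne_zero hp hpq hα i
    by_cases hq' : (q : ℕ) < l₁ + l₂
    · obtain ⟨β, hβ⟩ := exists_acoord_ne_zero hΓ (p := p) (by omega)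
      rw [Dpq_swap]
      exact neg_mem (Dpq_mono_zero_mem_liegen_of_acoord_ne_zero hq' hpq.symm hβ i)
    · simp [Dpq, pd_mono_zero_of_le (not_lt.mp hp), pd_mono_zero_of_le (not_lt.mp hq')]
  by_cases hp : l₁ ≤ (p : ℕ)
  · obtain ⟨β, hβ⟩ := exists_acoord_ne_zero hΓ hp
    rw [Dpq_swap]
    exact neg_mem (Dpq_mono_zero_mem_liegen_of_acoord_ne_zero (by omega) hpq.symm hβ i)
  · obtain ⟨α, hα⟩ := exists_acoord_ne_zero hΓ (p := ⟨l₁, by omega⟩) le_rfl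
    exact Dpq_mono_zero_mem_liegen_of_lt_of_lt (by omega) (by omega) hα i

lemma Dpq_mem_liegen (hl : 0 < l₂ + l₃) (hΓ : Nondeg F l₂ l₃ Γ) (p q : Fin (l₁ + l₂ + l₃))
    (u : Alg F l₁ l₂ l₃ Γ) : 𝔇 p q u ∈ L := by
  refine induction_on_mono u (fun α i => ?_) (fun u v hu hv => ?_) (fun c u hu => ?_)
  · rcases eq_or_ne α 0 with rfl | hα
    · exact Dpq_mono_zero_mem_liegen hl hΓ p q i
    · exact Dpq_mono_mem_liegen hα p q i
  · rw [Dpq_add]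
    exact add_mem hu hv
  · rw [Dpq_smul]
    exact Submodule.smul_mem _ c hu

lemma liegen_nonzeroWeightGens_eq_Ssub (hl : 0 < l₂ + l₃) (hΓ : Nondeg F l₂ l₃ Γ) :
    L = Ssub F l₁ l₂ l₃ Γ := by
  refine le_antisymm (liegen_le ?_ fun x hx y hy => wbr_mem_Ssub hx hy) ?_
  · rintro _ ⟨p, q, α, i, -, rfl⟩
    exact Submodule.subset_span ⟨p, q, _, rfl⟩
  · refine Submodule.span_le.mpr ?_
    rintro _ ⟨p, q, u, rfl⟩
    exact Dpq_mem_liegen hl hΓ p q u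

end WeightZero

end SDF

namespace SDF

variable (F : Type) [Field F] [IsAlgClosed F] [CharZero F]
variable (l₁ l₂ l₃ : ℕ) (Γ : AddSubgroup (Fin (l₂ + l₃) → F))

theorem stmt7 (h23 : 3 ≤ l₂ + l₃) (hΓ : Nondeg F l₂ l₃ Γ) :
    liegen F l₁ l₂ l₃ Γ
        {w | ∃ (p q : Fin (l₁ + l₂ + l₃)) (α : Γ) (i : Fin (l₁ + l₂) →₀ ℕ), α ≠ 0 ∧
            w = Dpq F l₁ l₂ l₃ Γ p q (mono F l₁ l₂ l₃ Γ α i)} =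
      Ssub F l₁ l₂ l₃ Γ ∧
    ∀ (p q : Fin (l₁ + l₂ + l₃)) (i : Fin (l₁ + l₂) →₀ ℕ),
      Dpq F l₁ l₂ l₃ Γ p q (mono F l₁ l₂ l₃ Γ 0 i) ∈
        liegen F l₁ l₂ l₃ Γ
          {w | ∃ (p q : Fin (l₁ + l₂ + l₃)) (α : Γ) (i : Fin (l₁ + l₂) →₀ ℕ), α ≠ 0 ∧
            w = Dpq F l₁ l₂ l₃ Γ p q (mono F l₁ l₂ l₃ Γ α i)} :=
  ⟨liegen_nonzeroWeightGens_eq_Ssub (by omega) hΓ,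
    fun p q i => Dpq_mem_liegen (by omega) hΓ p q _⟩

end SDF
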